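/- Deterministic version of Theorem 10: let à minimize ‖Y − XB‖_F² + 2τ‖B‖₁ over p×n matrices B, where Y = XA + E. If d₁(X'E) ≤ τ, then for every p×n matrix B, ‖XÃ − XA‖_F² ≤ ‖XB − XA‖_F² + 4τ‖B‖₁. -/

import Mathlib

/-
Comparing the penalized criterion at `Ã` and at `B` leaves, besides the prediction errors and
the penalties, only the noise term `⟨X'E, Ã - B⟩`. Trace duality bounds it by
`‖X'E‖_op ‖Ã - B‖₁ ≤ τ (‖Ã‖₁ + ‖B‖₁)`, and the `τ ‖Ã‖₁` terms cancel against the penalty.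
Both trace duality and the triangle inequality for `‖·‖₁` come from the eigendecomposition
`Cᴴ C = U diag(λ) Uᴴ`: in the eigenbasis `(b j)`, `⟨M, C⟩ = ∑ j ⟨M b j, C b j⟩` with
`‖C b j‖ = √λ j`, and `‖C‖₁ = ⟨W, C⟩` for the contraction `W = C U diag(λ^{-1/2}) Uᴴ`.
-/

open Matrix MeasureTheory

/-- List of singular values of a real matrix, sorted in decreasing order
(square roots of the eigenvalues of `Aᵀ * A`). -/
noncomputable def svList {m n : ℕ} (A : Matrix (Fin m) (Fin n) ℝ) : List ℝ :=
  (((List.ofFn (Matrix.isHermitian_conjTranspose_mul_self A).eigenvalues).map Real.sqrt).mergeSort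
    (fun a b => decide (b ≤ a)))

/-- `sv A k` is the `k`-th largest singular value of `A` (1-indexed); `0` if `k` exceeds
the number of singular values. -/
noncomputable def sv {m n : ℕ} (A : Matrix (Fin m) (Fin n) ℝ) (k : ℕ) : ℝ :=
  (svList A).getD (k - 1) 0

/-- Nuclear norm: sum of the singular values. -/
noncomputable def nuclearNorm {m n : ℕ} (A : Matrix (Fin m) (Fin n) ℝ) : ℝ :=
  (svList A).sum

/-- Squared Frobenius norm. -/
noncomputable def frobSq {m n : ℕ} (A : Matrix (Fin m) (Fin n) ℝ) : ℝ :=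
  ∑ i, ∑ j, (A i j) ^ 2

/-- Frobenius inner product. -/
noncomputable def frobInner {m n : ℕ} (C D : Matrix (Fin m) (Fin n) ℝ) : ℝ :=
  ∑ i, ∑ j, C i j * D i j

open Unitary
open scoped Matrix.Norms.L2Operator

section
variable {𝕜 : Type*} [RCLike 𝕜] {n : Type*} [Fintype n] [DecidableEq n]

lemma Matrix.l2_opNorm_le_one_of_mem_unitaryGroup {U : Matrix n n 𝕜}
    (hU : U ∈ unitaryGroup n 𝕜) : ‖U‖ ≤ 1 := by
  have h : ‖U‖ * ‖U‖ ≤ 1 := by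
    rw [← l2_opNorm_conjTranspose_mul_self, ← star_eq_conjTranspose,
      Unitary.star_mul_self_of_mem hU, ← diagonal_one, l2_opNorm_diagonal]
    exact (pi_norm_const_le (1 : 𝕜)).trans_eq norm_one
  nlinarith [norm_nonneg U]

lemma Matrix.l2_opNorm_conjStarAlgAut_le (U : unitaryGroup n 𝕜) (X : Matrix n n 𝕜) :
    ‖conjStarAlgAut 𝕜 _ U X‖ ≤ ‖X‖ := by
  have hU := l2_opNorm_le_one_of_mem_unitaryGroup U.2
  have hU' := l2_opNorm_le_one_of_mem_unitaryGroup (Unitary.star_mem U.2)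
  calc ‖conjStarAlgAut 𝕜 _ U X‖ ≤ ‖(U : Matrix n n 𝕜)‖ * ‖X‖ * ‖star (U : Matrix n n 𝕜)‖ :=
        (l2_opNorm_mul _ _).trans (mul_le_mul_of_nonneg_right (l2_opNorm_mul _ _) (norm_nonneg _))
    _ ≤ 1 * ‖X‖ * 1 := by gcongr
    _ = ‖X‖ := by ring

end

section
variable {R : Type*} [CommRing R] [StarRing R] {n : Type*} [Fintype n] [DecidableEq n]

lemma Matrix.trace_conjStarAlgAut (U : unitaryGroup n R) (X : Matrix n n R) :
    (conjStarAlgAut R _ U X).trace = X.trace := by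
  rw [conjStarAlgAut_apply, trace_mul_comm, ← Matrix.mul_assoc, Unitary.coe_star_mul_self,
    Matrix.one_mul]

end

lemma Matrix.IsHermitian.eq_conjStarAlgAut_diagonal_eigenvalues {n : Type*} [Fintype n]
    [DecidableEq n] {A : Matrix n n ℝ} (hA : A.IsHermitian) :
    A = conjStarAlgAut ℝ _ hA.eigenvectorUnitary (diagonal hA.eigenvalues) := by
  conv_lhs => rw [hA.spectral_theorem]
  simp only [RCLike.ofReal_real_eq_id, Function.id_comp]

lemma dotProduct_mulVec_self {m n : Type*} [Fintype m] [Fintype n] (C : Matrix m n ℝ)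
    (x : n → ℝ) : (C *ᵥ x) ⬝ᵥ (C *ᵥ x) = x ⬝ᵥ ((Cᴴ * C) *ᵥ x) := by
  rw [← mulVec_mulVec, dotProduct_mulVec x, conjTranspose_eq_transpose_of_trivial,
    vecMul_transpose]

section
variable {p n : ℕ}

lemma dotProduct_mulVec_eigenvectorBasis (C : Matrix (Fin p) (Fin n) ℝ) (j : Fin n) :
    (C *ᵥ (isHermitian_conjTranspose_mul_self C).eigenvectorBasis j) ⬝ᵥ
      (C *ᵥ (isHermitian_conjTranspose_mul_self C).eigenvectorBasis j) =
      (isHermitian_conjTranspose_mul_self C).eigenvalues j := by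
  set hC := isHermitian_conjTranspose_mul_self C
  have hb : (hC.eigenvectorBasis j : Fin n → ℝ) ⬝ᵥ hC.eigenvectorBasis j = 1 :=
    hC.eigenvectorBasis.inner_eq_one j
  rw [dotProduct_mulVec_self, hC.mulVec_eigenvectorBasis, dotProduct_smul, hb, smul_eq_mul,
    mul_one]

lemma nuclearNorm_eq_sum_sqrt_eigenvalues (C : Matrix (Fin p) (Fin n) ℝ) :
    nuclearNorm C = ∑ j, √((isHermitian_conjTranspose_mul_self C).eigenvalues j) := by
  rw [nuclearNorm, svList, (List.mergeSort_perm _ _).sum_eq, List.map_ofFn, List.sum_ofFn]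
  rfl

lemma nuclearNorm_nonneg (C : Matrix (Fin p) (Fin n) ℝ) : 0 ≤ nuclearNorm C := by
  rw [nuclearNorm_eq_sum_sqrt_eigenvalues]
  positivity

lemma mem_svList_iff (C : Matrix (Fin p) (Fin n) ℝ) (x : ℝ) :
    x ∈ svList C ↔ ∃ j, √((isHermitian_conjTranspose_mul_self C).eigenvalues j) = x := by
  simp [svList, List.mem_mergeSort]

lemma sv_one_nonneg (C : Matrix (Fin p) (Fin n) ℝ) : 0 ≤ sv C 1 := by
  rw [sv, List.getD_eq_getElem?_getD]
  rcases h : (svList C)[0]? with _ | x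
  · simp
  · obtain ⟨j, rfl⟩ := (mem_svList_iff C x).1 (List.mem_of_getElem? h)
    exact Real.sqrt_nonneg _

lemma sqrt_eigenvalues_le_sv_one (C : Matrix (Fin p) (Fin n) ℝ) (j : Fin n) :
    √((isHermitian_conjTranspose_mul_self C).eigenvalues j) ≤ sv C 1 := by
  have hmem := (mem_svList_iff C _).2 ⟨j, rfl⟩
  have hsorted : (svList C).Pairwise (fun a b => decide (b ≤ a) = true) :=
    List.pairwise_mergeSort
      (fun a b c hab hbc => by simp only [decide_eq_true_eq] at *; exact hbc.trans hab)
      (fun a b => by simpa using le_total b a) _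
  rw [sv]
  rcases h : svList C with _ | ⟨x, l⟩
  · simp [h] at hmem
  · rw [h] at hmem hsorted
    rcases List.mem_cons.1 hmem with heq | hl
    · simp [← heq]
    · simpa using List.rel_of_pairwise_cons hsorted hl

lemma l2_opNorm_le_sv_one (M : Matrix (Fin p) (Fin n) ℝ) : ‖M‖ ≤ sv M 1 := by
  set hM := isHermitian_conjTranspose_mul_self M
  have hΛ : ‖hM.eigenvalues‖ ≤ sv M 1 * sv M 1 := by
    refine (pi_norm_le_iff_of_nonneg (mul_self_nonneg _)).2 fun j => ?_
    have h0 : 0 ≤ hM.eigenvalues j := (posSemidef_conjTranspose_mul_self M).eigenvalues_nonneg j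
    rw [Real.norm_of_nonneg h0, ← Real.mul_self_sqrt h0]
    exact mul_self_le_mul_self (Real.sqrt_nonneg _) (sqrt_eigenvalues_le_sv_one M j)
  have h : ‖M‖ * ‖M‖ ≤ sv M 1 * sv M 1 := by
    rw [← l2_opNorm_conjTranspose_mul_self, hM.eq_conjStarAlgAut_diagonal_eigenvalues]
    exact (l2_opNorm_conjStarAlgAut_le _ _).trans ((l2_opNorm_diagonal _).trans_le hΛ)
  exact (mul_self_le_mul_self_iff (norm_nonneg _) (sv_one_nonneg M)).2 h

lemma frobInner_eq_trace (P Q : Matrix (Fin p) (Fin n) ℝ) : frobInner P Q = (Pᵀ * Q).trace := by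
  rw [frobInner, Finset.sum_comm]
  rfl

lemma frobInner_eq_sum_dotProduct (b : OrthonormalBasis (Fin n) ℝ (EuclideanSpace ℝ (Fin n)))
    (M C : Matrix (Fin p) (Fin n) ℝ) :
    frobInner M C = ∑ j, (M *ᵥ b j) ⬝ᵥ (C *ᵥ b j) := by
  have h (i : Fin p) : M i ⬝ᵥ C i = ∑ j, (M *ᵥ b j) i * (C *ᵥ b j) i := by
    simpa [mulVec, EuclideanSpace.inner_eq_star_dotProduct, dotProduct_comm] using
      (b.sum_inner_mul_inner (WithLp.toLp 2 (M i)) (WithLp.toLp 2 (C i))).symm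
  simp only [dotProduct]
  rw [Finset.sum_comm]
  exact Finset.sum_congr rfl fun i _ => h i

lemma frobInner_le_l2_opNorm_mul_nuclearNorm (M C : Matrix (Fin p) (Fin n) ℝ) :
    frobInner M C ≤ ‖M‖ * nuclearNorm C := by
  set hC := isHermitian_conjTranspose_mul_self C
  rw [frobInner_eq_sum_dotProduct hC.eigenvectorBasis, nuclearNorm_eq_sum_sqrt_eigenvalues,
    Finset.mul_sum]
  refine Finset.sum_le_sum fun j _ => ?_
  set b := hC.eigenvectorBasis j
  have hCb : ‖WithLp.toLp 2 (C *ᵥ b)‖ = √(hC.eigenvalues j) := by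
    rw [EuclideanSpace.norm_eq, ← dotProduct_mulVec_eigenvectorBasis]
    simp [dotProduct, sq, b]
  calc (M *ᵥ b) ⬝ᵥ (C *ᵥ b) = inner ℝ (WithLp.toLp 2 (M *ᵥ b)) (WithLp.toLp 2 (C *ᵥ b)) :=
        dotProduct_comm _ _
    _ ≤ ‖WithLp.toLp 2 (M *ᵥ b)‖ * ‖WithLp.toLp 2 (C *ᵥ b)‖ := real_inner_le_norm _ _
    _ ≤ ‖M‖ * ‖b‖ * √(hC.eigenvalues j) := by
        rw [hCb]; exact mul_le_mul_of_nonneg_right (l2_opNorm_mulVec M b) (Real.sqrt_nonneg _)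
    _ = ‖M‖ * √(hC.eigenvalues j) := by rw [hC.eigenvectorBasis.orthonormal.1 j, mul_one]

/-- `C (Cᴴ C)^{-1/2}`, with `(√0)⁻¹ = 0` on the kernel: the partial isometry of the polar
decomposition of `C`. -/
noncomputable def polarIsometry (C : Matrix (Fin p) (Fin n) ℝ) : Matrix (Fin p) (Fin n) ℝ :=
  let hC := isHermitian_conjTranspose_mul_self C
  C * conjStarAlgAut ℝ _ hC.eigenvectorUnitary (diagonal fun j => (√(hC.eigenvalues j))⁻¹)

lemma conjTranspose_polarIsometry_mul_self (C : Matrix (Fin p) (Fin n) ℝ) :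
    (polarIsometry C)ᴴ * C =
      conjStarAlgAut ℝ _ (isHermitian_conjTranspose_mul_self C).eigenvectorUnitary
        (diagonal fun j => √((isHermitian_conjTranspose_mul_self C).eigenvalues j)) := by
  set hC := isHermitian_conjTranspose_mul_self C
  set φ := conjStarAlgAut ℝ (Matrix (Fin n) (Fin n) ℝ) hC.eigenvectorUnitary
  calc (polarIsometry C)ᴴ * C = φ (diagonal fun j => (√(hC.eigenvalues j))⁻¹) * (Cᴴ * C) := by
        rw [polarIsometry, conjTranspose_mul, ← star_eq_conjTranspose, ← map_star,
          star_eq_conjTranspose, diagonal_conjTranspose, Matrix.mul_assoc]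
        simp [φ]
    _ = φ (diagonal fun j => (√(hC.eigenvalues j))⁻¹) * φ (diagonal hC.eigenvalues) :=
        congrArg _ hC.eq_conjStarAlgAut_diagonal_eigenvalues
    _ = _ := by rw [← map_mul, diagonal_mul_diagonal]; simp only [inv_mul_eq_div, Real.div_sqrt]

lemma l2_opNorm_polarIsometry_le_one (C : Matrix (Fin p) (Fin n) ℝ) : ‖polarIsometry C‖ ≤ 1 := by
  set hC := isHermitian_conjTranspose_mul_self C
  have hgram : (polarIsometry C)ᴴ * polarIsometry C = conjStarAlgAut ℝ _ hC.eigenvectorUnitary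
      (diagonal fun j => √(hC.eigenvalues j) * (√(hC.eigenvalues j))⁻¹) := by
    nth_rw 2 [polarIsometry]
    rw [← Matrix.mul_assoc, conjTranspose_polarIsometry_mul_self, ← map_mul, diagonal_mul_diagonal]
  have hd : ‖fun j => √(hC.eigenvalues j) * (√(hC.eigenvalues j))⁻¹‖ ≤ 1 :=
    (pi_norm_le_iff_of_nonneg zero_le_one).2 fun j => by
      rw [Real.norm_of_nonneg (by positivity)]
      exact mul_inv_le_one
  have h : ‖polarIsometry C‖ * ‖polarIsometry C‖ ≤ 1 := by
    rw [← l2_opNorm_conjTranspose_mul_self, hgram]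
    exact (l2_opNorm_conjStarAlgAut_le _ _).trans ((l2_opNorm_diagonal _).trans_le hd)
  nlinarith [norm_nonneg (polarIsometry C)]

lemma frobInner_polarIsometry_self (C : Matrix (Fin p) (Fin n) ℝ) :
    frobInner (polarIsometry C) C = nuclearNorm C := by
  rw [frobInner_eq_trace, ← conjTranspose_eq_transpose_of_trivial,
    conjTranspose_polarIsometry_mul_self, trace_conjStarAlgAut, trace_diagonal,
    nuclearNorm_eq_sum_sqrt_eigenvalues]

lemma frobInner_sub_right (M P Q : Matrix (Fin p) (Fin n) ℝ) :
    frobInner M (P - Q) = frobInner M P - frobInner M Q := by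
  simp only [frobInner_eq_trace, Matrix.mul_sub, trace_sub]

lemma frobInner_neg_left (M P : Matrix (Fin p) (Fin n) ℝ) :
    frobInner (-M) P = -frobInner M P := by
  simp only [frobInner_eq_trace, transpose_neg, Matrix.neg_mul, trace_neg]

lemma frobInner_mul_right {m : ℕ} (E : Matrix (Fin m) (Fin n) ℝ) (X : Matrix (Fin m) (Fin p) ℝ)
    (D : Matrix (Fin p) (Fin n) ℝ) : frobInner E (X * D) = frobInner (Xᵀ * E) D := by
  rw [frobInner_eq_trace, frobInner_eq_trace, transpose_mul, transpose_transpose, Matrix.mul_assoc]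

lemma frobSq_sub (P Q : Matrix (Fin p) (Fin n) ℝ) :
    frobSq (P - Q) = frobSq P - 2 * frobInner P Q + frobSq Q := by
  simp only [frobSq, frobInner, Matrix.sub_apply, Finset.mul_sum, ← Finset.sum_sub_distrib,
    ← Finset.sum_add_distrib]
  exact Finset.sum_congr rfl fun i _ => Finset.sum_congr rfl fun j _ => by ring

lemma nuclearNorm_sub_le (P Q : Matrix (Fin p) (Fin n) ℝ) :
    nuclearNorm (P - Q) ≤ nuclearNorm P + nuclearNorm Q := by
  set W := polarIsometry (P - Q)
  have hW := l2_opNorm_polarIsometry_le_one (P - Q)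
  have hP : frobInner W P ≤ nuclearNorm P :=
    (frobInner_le_l2_opNorm_mul_nuclearNorm W P).trans
      (mul_le_of_le_one_left (nuclearNorm_nonneg P) hW)
  have hQ : frobInner (-W) Q ≤ nuclearNorm Q :=
    (frobInner_le_l2_opNorm_mul_nuclearNorm (-W) Q).trans
      (mul_le_of_le_one_left (nuclearNorm_nonneg Q) ((norm_neg W).trans_le hW))
  rw [← frobInner_polarIsometry_self, frobInner_sub_right]
  rw [frobInner_neg_left] at hQ
  linarith

end

theorem nnp_oracle_inequality_general {m n p : ℕ}
    (Y : Matrix (Fin m) (Fin n) ℝ) (X : Matrix (Fin m) (Fin p) ℝ)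
    (A : Matrix (Fin p) (Fin n) ℝ)
    (τ : ℝ)
    (Atil : Matrix (Fin p) (Fin n) ℝ)
    (hmin : ∀ B : Matrix (Fin p) (Fin n) ℝ,
      frobSq (Y - X * Atil) + 2 * τ * nuclearNorm Atil
        ≤ frobSq (Y - X * B) + 2 * τ * nuclearNorm B)
    (hevent : sv (Xᵀ * (Y - X * A)) 1 ≤ τ) :
    ∀ B : Matrix (Fin p) (Fin n) ℝ,
      frobSq (X * Atil - X * A) ≤ frobSq (X * B - X * A) + 4 * τ * nuclearNorm B := by
  intro B
  have hnorm : ‖Xᵀ * (Y - X * A)‖ ≤ τ := (l2_opNorm_le_sv_one _).trans hevent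
  have hduality :
      frobInner (Y - X * A) (X * (Atil - B)) ≤ τ * (nuclearNorm Atil + nuclearNorm B) := by
    rw [frobInner_mul_right]
    exact (frobInner_le_l2_opNorm_mul_nuclearNorm _ _).trans (mul_le_mul hnorm
      (nuclearNorm_sub_le _ _) (nuclearNorm_nonneg _) ((norm_nonneg _).trans hnorm))
  have hsplit : frobInner (Y - X * A) (X * (Atil - B)) =
      frobInner (Y - X * A) (X * Atil - X * A) - frobInner (Y - X * A) (X * B - X * A) := by
    rw [← frobInner_sub_right, Matrix.mul_sub, sub_sub_sub_cancel_right]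
  have hbasic := hmin B
  rw [show Y - X * Atil = (Y - X * A) - (X * Atil - X * A) by abel,
    show Y - X * B = (Y - X * A) - (X * B - X * A) by abel,
    frobSq_sub (Y - X * A), frobSq_sub (Y - X * A)] at hbasic
  linarith

/-- Theorem 10 (deterministic form): if d₁(X'E) ≤ τ, the nuclear norm penalized estimator
Ã satisfies ‖XÃ − XA‖_F² ≤ ‖XB − XA‖_F² + 4τ‖B‖₁ for every B. -/
theorem nnp_oracle_inequality {m n p : ℕ}
    (Y : Matrix (Fin m) (Fin n) ℝ) (X : Matrix (Fin m) (Fin p) ℝ)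
    (A : Matrix (Fin p) (Fin n) ℝ)
    (τ : ℝ) (hτ : 0 < τ)
    (Atil : Matrix (Fin p) (Fin n) ℝ)
    (hmin : ∀ B : Matrix (Fin p) (Fin n) ℝ,
      frobSq (Y - X * Atil) + 2 * τ * nuclearNorm Atil
        ≤ frobSq (Y - X * B) + 2 * τ * nuclearNorm B)
    (hevent : sv (Xᵀ * (Y - X * A)) 1 ≤ τ) :
    ∀ B : Matrix (Fin p) (Fin n) ℝ,
      frobSq (X * Atil - X * A) ≤ frobSq (X * B - X * A) + 4 * τ * nuclearNorm B :=
  nnp_oracle_inequality_general Y X A τ Atil hmin hevent
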